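/- arXiv:1212.4411 — 2 statements merged into one kernel-verified Lean document; each statement's English description precedes it below -/
import Mathlib

section
/- Let G be a finite connected simple graph, let σ be an automorphism of G, and let F be a subset of V(G) such that the five sets F, σ(F), σ²(F), σ³(F), σ⁴(F) form a partition of V(G). Then for every natural number λ ≥ 1, 2·W_λ(G) = 5·D_λ(F, V(G)). -/
/-- The λ-Wiener index of a graph: `W_λ(G) = Σ_{{u,v}} d_G(u,v)^λ`, the sum running over
all unordered pairs of distinct vertices. -/
noncomputable def wienerL {V : Type*} [Fintype V] [DecidableEq V]
    (G : SimpleGraph V) (l : ℕ) : ℕ :=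
  ∑ p ∈ Finset.univ.filter (fun p : Sym2 V => ¬ p.IsDiag),
    Sym2.lift ⟨fun u v => G.dist u v ^ l, fun u v => by simp [SimpleGraph.dist_comm]⟩ p

/-- `D_λ(F, K) = Σ_{u∈F} Σ_{v∈K} d_G(u,v)^λ`. -/
noncomputable def Dl {V : Type*} (G : SimpleGraph V) (l : ℕ) (F K : Finset V) : ℕ :=
  ∑ u ∈ F, ∑ v ∈ K, G.dist u v ^ l

/-! Graph automorphisms preserve distances, so each block `σ^i(F)` of the partition has the same
distance row sum `D_λ(F, V)`. Summing the whole distance matrix, which has zero diagonal for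
`λ ≥ 1` and counts every unordered pair twice, gives `2 W_λ = 5 D_λ(F, V)`. -/

open Finset

namespace SimpleGraph

variable {V W : Type*} {G : SimpleGraph V} {G' : SimpleGraph W}

lemma Hom.edist_le (f : G →g G') (u v : V) : G'.edist (f u) (f v) ≤ G.edist u v := by
  by_cases h : G.Reachable u v
  · obtain ⟨p, hp⟩ := h.exists_walk_length_eq_edist
    rw [← hp, ← p.length_map f]
    exact SimpleGraph.edist_le _
  · rw [edist_eq_top_of_not_reachable h]
    exact le_top

lemma Iso.edist_eq (f : G ≃g G') (u v : V) : G'.edist (f u) (f v) = G.edist u v :=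
  le_antisymm (f.toHom.edist_le u v) (by simpa using f.symm.toHom.edist_le (f u) (f v))

lemma Iso.dist_eq (f : G ≃g G') (u v : V) : G'.dist (f u) (f v) = G.dist u v := by
  simp only [dist, f.edist_eq]

lemma Iso.coe_pow (σ : G ≃g G) (n : ℕ) : ⇑(σ ^ n) = (⇑σ)^[n] := by
  induction n with
  | zero => rfl
  | succ n ih => rw [pow_succ', RelIso.coe_mul, ih, Function.iterate_succ']

end SimpleGraph

lemma Finset.sum_offDiag_sym2_mk {α M : Type*} [Fintype α] [DecidableEq α] [AddCommMonoid M]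
    (f : Sym2 α → M) :
    ∑ x ∈ (univ : Finset α).offDiag, f s(x.1, x.2) =
      2 • ∑ z ∈ univ.filter (fun z : Sym2 α => ¬ z.IsDiag), f z := by
  have hmaps : ∀ x ∈ (univ : Finset α).offDiag,
      s(x.1, x.2) ∈ univ.filter (fun z : Sym2 α => ¬ z.IsDiag) := fun x hx =>
    mem_filter.2 ⟨mem_univ _, not_isDiag_mk_of_mem_offDiag hx⟩
  rw [← sum_fiberwise_of_maps_to hmaps, smul_sum]
  refine sum_congr rfl fun z hz => ?_
  induction z with
  | _ a b =>
    have hab : a ≠ b := by simpa using (mem_filter.1 hz).2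
    have hfiber :
        {x ∈ (univ : Finset α).offDiag | s(x.1, x.2) = s(a, b)} = {(a, b), (b, a)} := by
      ext ⟨c, d⟩
      aesop
    rw [hfiber, sum_pair (by simp [hab]), Sym2.eq_swap, two_nsmul]

lemma two_mul_wienerL {V : Type*} [Fintype V] [DecidableEq V] (G : SimpleGraph V) {l : ℕ}
    (hl : l ≠ 0) :
    2 * wienerL G l = Dl G l univ univ := by
  rw [wienerL, ← smul_eq_mul, ← sum_offDiag_sym2_mk, Dl, ← sum_product']
  refine sum_subset (fun x _ => mem_product.2 ⟨mem_univ _, mem_univ _⟩) fun x _ hx => ?_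
  have : x.1 = x.2 := by simpa using hx
  simp [this, hl]

lemma Dl_image_iso {V W : Type*} [DecidableEq W] {G : SimpleGraph V} {G' : SimpleGraph W}
    (f : G ≃g G') (l : ℕ) (F K : Finset V) :
    Dl G' l (F.image f) (K.image f) = Dl G l F K := by
  simp only [Dl, sum_image fun _ _ _ _ h => f.injective h, f.dist_eq]

theorem stmt7_general {V : Type*} [Fintype V] [DecidableEq V]
    (G : SimpleGraph V) (σ : G ≃g G) (F : Finset V)
    (hdisj : ∀ i j : Fin 5, i ≠ j →
      Disjoint (F.image ((⇑σ)^[(i : ℕ)])) (F.image ((⇑σ)^[(j : ℕ)])))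
    (hcover : Finset.univ.biUnion (fun i : Fin 5 => F.image ((⇑σ)^[(i : ℕ)])) = Finset.univ)
    (l : ℕ) (hl : 1 ≤ l) :
    2 * wienerL G l = 5 * Dl G l F Finset.univ := by
  have hblock (i : Fin 5) : Dl G l (F.image ((⇑σ)^[(i : ℕ)])) univ = Dl G l F univ := by
    rw [← σ.coe_pow, ← Dl_image_iso (σ ^ (i : ℕ)) l F univ,
      image_univ_of_surjective (σ ^ (i : ℕ)).surjective]
  calc 2 * wienerL G l = Dl G l univ univ := two_mul_wienerL G (by omega)
    _ = ∑ i : Fin 5, Dl G l (F.image ((⇑σ)^[(i : ℕ)])) univ := by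
      rw [← hcover, Dl, sum_biUnion fun i _ j _ hij => hdisj i j hij]; rfl
    _ = 5 * Dl G l F univ := by simp [hblock]

/-- If `σ` is an automorphism of a finite connected simple graph `G` and
`F, σ(F), σ²(F), σ³(F), σ⁴(F)` partition the vertex set, then for every `λ ≥ 1`,
`2·W_λ(G) = 5·D_λ(F, V(G))`. -/
theorem stmt7 {V : Type*} [Fintype V] [DecidableEq V]
    (G : SimpleGraph V) (hG : G.Connected) (σ : G ≃g G) (F : Finset V)
    (hdisj : ∀ i j : Fin 5, i ≠ j →
      Disjoint (F.image ((⇑σ)^[(i : ℕ)])) (F.image ((⇑σ)^[(j : ℕ)])))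
    (hcover : Finset.univ.biUnion (fun i : Fin 5 => F.image ((⇑σ)^[(i : ℕ)])) = Finset.univ)
    (l : ℕ) (hl : 1 ≤ l) :
    2 * wienerL G l = 5 * Dl G l F Finset.univ :=
  stmt7_general G σ F hdisj hcover l hl
end

section
/- Let G be a finite connected simple graph, let σ be an automorphism of G, and let F be a subset of V(G) such that the five sets F, σ(F), σ²(F), σ³(F), σ⁴(F) form a partition of V(G). Then for every natural number λ, D_λ(F, V(G)) = D_λ(F,F) + 2·D_λ(F,σ(F)) + 2·D_λ(F,σ²(F)). -/
open Function Finset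

theorem Finset.image_iterate_eq_self_of_partition {α : Type*} [Fintype α] [DecidableEq α]
    {f : α → α} (hf : Injective f) {F : Finset α} {n : ℕ}
    (hdisj : ∀ i j : Fin n, i ≠ j → Disjoint (F.image f^[i]) (F.image f^[j]))
    (hcover : univ.biUnion (fun i : Fin n => F.image f^[i]) = univ) :
    F.image f^[n] = F := by
  refine eq_of_subset_of_card_le ?_ (card_image_of_injective _ (hf.iterate n)).ge
  intro x hx
  obtain ⟨a, ha, rfl⟩ := mem_image.mp hx
  obtain ⟨i, -, hi⟩ := mem_biUnion.mp (hcover ▸ mem_univ (f^[n] a))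
  obtain ⟨b, hb, hba⟩ := mem_image.mp hi
  have hb_eq : b = f^[n - i] a :=
    hf.iterate i (by rw [hba, ← iterate_add_apply, Nat.add_sub_cancel' i.isLt.le])
  rcases Nat.eq_zero_or_pos (i : ℕ) with hi | hi
  · rw [hi, iterate_zero_apply] at hba
    exact hba ▸ hb
  · refine absurd (hdisj ⟨0, i.pos⟩ ⟨n - i, by omega⟩ (Fin.ne_of_val_ne (show 0 ≠ n - i by omega))) ?_
    exact not_disjoint_iff.mpr ⟨b, mem_image.mpr ⟨b, hb, rfl⟩, mem_image.mpr ⟨a, ha, hb_eq.symm⟩⟩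

namespace SimpleGraph

variable {V W : Type*} {G : SimpleGraph V} {H : SimpleGraph W}

theorem Hom.edist_map_le (f : G →g H) (u v : V) : H.edist (f u) (f v) ≤ G.edist u v :=
  le_iInf fun p => (p.map f).edist_le.trans_eq (by rw [Walk.length_map])

theorem Iso.edist_map (e : G ≃g H) (u v : V) : H.edist (e u) (e v) = G.edist u v :=
  le_antisymm (e.toHom.edist_map_le u v) (by simpa using e.symm.toHom.edist_map_le (e u) (e v))

theorem Iso.dist_map (e : G ≃g H) (u v : V) : H.dist (e u) (e v) = G.dist u v := by
  rw [dist, dist, e.edist_map]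

theorem Iso.dist_iterate_map (σ : G ≃g G) (k : ℕ) (u v : V) :
    G.dist (σ^[k] u) (σ^[k] v) = G.dist u v := by
  induction k with
  | zero => rfl
  | succ k ih => rw [iterate_succ_apply', iterate_succ_apply', σ.dist_map, ih]

end SimpleGraph

section Dl

variable {V : Type*} (G : SimpleGraph V) (l : ℕ)

theorem Dl_comm (A B : Finset V) : Dl G l A B = Dl G l B A := by
  rw [Dl, Dl, sum_comm]
  simp only [G.dist_comm]

theorem Dl_biUnion [DecidableEq V] {ι : Type*} (A : Finset V) {s : Finset ι} {t : ι → Finset V}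
    (ht : (s : Set ι).PairwiseDisjoint t) :
    Dl G l A (s.biUnion t) = ∑ i ∈ s, Dl G l A (t i) := by
  simp only [Dl, sum_biUnion ht]
  exact sum_comm

variable [DecidableEq V]

theorem Dl_image_iterate (σ : G ≃g G) (k : ℕ) (A B : Finset V) :
    Dl G l (A.image σ^[k]) (B.image σ^[k]) = Dl G l A B := by
  simp only [Dl, sum_image (σ.injective.iterate k).injOn, σ.dist_iterate_map]

theorem Dl_image_iterate_sub (σ : G ≃g G) {F : Finset V} {n k : ℕ}
    (hF : F.image σ^[n] = F) (hk : k ≤ n) :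
    Dl G l F (F.image σ^[k]) = Dl G l F (F.image σ^[n - k]) :=
  calc Dl G l F (F.image σ^[k])
      = Dl G l (F.image σ^[n - k]) ((F.image σ^[k]).image σ^[n - k]) :=
        (Dl_image_iterate G l σ _ _ _).symm
    _ = Dl G l (F.image σ^[n - k]) F := by
        rw [image_image, ← iterate_add, Nat.sub_add_cancel hk, hF]
    _ = Dl G l F (F.image σ^[n - k]) := Dl_comm G l _ _

end Dl

theorem stmt11_general {V : Type*} [Fintype V] [DecidableEq V]
    (G : SimpleGraph V) (σ : G ≃g G) (F : Finset V)
    (hdisj : ∀ i j : Fin 5, i ≠ j →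
      Disjoint (F.image ((⇑σ)^[(i : ℕ)])) (F.image ((⇑σ)^[(j : ℕ)])))
    (hcover : Finset.univ.biUnion (fun i : Fin 5 => F.image ((⇑σ)^[(i : ℕ)])) = Finset.univ)
    (l : ℕ) :
    Dl G l F Finset.univ =
      Dl G l F F + 2 * Dl G l F (F.image ⇑σ) + 2 * Dl G l F (F.image ((⇑σ)^[2])) := by
  have hperiod := image_iterate_eq_self_of_partition σ.injective hdisj hcover
  rw [← hcover, Dl_biUnion G l F fun i _ j _ => hdisj i j, Fin.sum_univ_five]
  have h3 := Dl_image_iterate_sub G l σ hperiod (k := 3) (by norm_num)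
  have h4 := Dl_image_iterate_sub G l σ hperiod (k := 4) (by norm_num)
  simp only [Fin.coe_ofNat_eq_mod, Nat.reduceMod,
    Nat.reduceSub, iterate_zero, iterate_one, image_id] at h3 h4 ⊢
  rw [h3, h4]
  ring

/-- If `σ` is an automorphism of a finite connected simple graph `G` and
`F, σ(F), σ²(F), σ³(F), σ⁴(F)` partition the vertex set, then
`D_λ(F, V(G)) = D_λ(F,F) + 2·D_λ(F,σ(F)) + 2·D_λ(F,σ²(F))`. -/
theorem stmt11 {V : Type*} [Fintype V] [DecidableEq V]
    (G : SimpleGraph V) (hG : G.Connected) (σ : G ≃g G) (F : Finset V)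
    (hdisj : ∀ i j : Fin 5, i ≠ j →
      Disjoint (F.image ((⇑σ)^[(i : ℕ)])) (F.image ((⇑σ)^[(j : ℕ)])))
    (hcover : Finset.univ.biUnion (fun i : Fin 5 => F.image ((⇑σ)^[(i : ℕ)])) = Finset.univ)
    (l : ℕ) :
    Dl G l F Finset.univ =
      Dl G l F F + 2 * Dl G l F (F.image ⇑σ) + 2 * Dl G l F (F.image ((⇑σ)^[2])) :=
  stmt11_general G σ F hdisj hcover l
end
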